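/- Let N ≥ 3 be an integer and let Ω ⊂ ℝ^N be a bounded measurable set. Then there exists a constant c₂ > 0 (depending only on N and Ω) such that for every ε ∈ (0,1/2] and every y ∈ ℝ^N, ∫_Ω U_{ε,y}(x)^{N/(N−2)} dx ≤ c₂ · ε^{N/2} · |log ε|. -/

import Mathlib

open Real MeasureTheory

/-- The Talenti instanton `U(x) = (N(N−2)/(N(N−2)+|x|²))^((N−2)/2)` on `ℝ^N`. -/
noncomputable def talenti (N : ℕ) (x : EuclideanSpace ℝ (Fin N)) : ℝ :=
  ((N : ℝ) * ((N : ℝ) - 2) / ((N : ℝ) * ((N : ℝ) - 2) + ‖x‖ ^ 2)) ^ (((N : ℝ) - 2) / 2)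

/-- The rescaled instanton `U_{ε,y}(x) = ε^(−(N−2)/2)·U((x−y)/ε)`. -/
noncomputable def talentiRescaled (N : ℕ) (ε : ℝ) (y x : EuclideanSpace ℝ (Fin N)) : ℝ :=
  ε ^ (-(((N : ℝ) - 2) / 2)) * talenti N (ε⁻¹ • (x - y))

/-! After rescaling, `U_{ε,y}^{N/(N-2)} = (N(N-2))^{N/2} ε^{N/2} (N(N-2)ε² + |x-y|²)^{-N/2}`.
The last factor is at most `(N(N-2)ε²)^{-N/2}` on `B(y,ε)`, at most `r^{-N}` on a dyadic annulus
`B(y,2r) \ B(y,r)` of volume `≍ r^N`, and at most `1` outside `B(y,1)`. So the ball and each of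
the `≈ log₂(1/ε)` annuli between radii `ε` and `1` contribute `O(1)`, and the rest at most `|Ω|`. -/

open Metric Module
open scoped ENNReal

lemma le_inv_pow_of_mul_pow_le {a r t : ℝ} {d : ℕ} (h : a * t ^ d ≤ 1) (hr : 0 < r)
    (hrt : r ≤ t) : a ≤ (r ^ d)⁻¹ := by
  rcases le_or_gt a 0 with ha | ha
  · exact ha.trans (by positivity)
  rw [← one_div, le_div_iff₀ (by positivity)]
  exact (mul_le_mul_of_nonneg_left (pow_le_pow_left₀ hr.le hrt d) ha.le).trans h

lemma sq_rpow_half {t : ℝ} (ht : 0 ≤ t) (d : ℕ) : (t ^ 2) ^ ((d : ℝ) / 2) = t ^ d := by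
  rw [← Real.rpow_natCast t 2, ← Real.rpow_mul ht, ← Real.rpow_natCast]
  congr 1
  push_cast
  ring

lemma add_sq_rpow_neg_half_mul_pow_le_one {b t : ℝ} (hb : 0 < b) (ht : 0 ≤ t) (d : ℕ) :
    (b + t ^ 2) ^ (-((d : ℝ) / 2)) * t ^ d ≤ 1 := by
  rw [Real.rpow_neg (by positivity), inv_mul_eq_div, div_le_one (by positivity),
    ← sq_rpow_half ht]
  exact Real.rpow_le_rpow (by positivity) (le_add_of_nonneg_left hb.le) (by positivity)

lemma exists_two_pow_mul_ge_one {ε : ℝ} (hε : 0 < ε) (hε2 : ε ≤ 1 / 2) :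
    ∃ n : ℕ, 1 ≤ 2 ^ n * ε ∧ 1 ≤ n ∧ n * log 2 ≤ 2 * |log ε| := by
  have h2ε : 2 ≤ ε⁻¹ := by rw [le_inv_comm₀ two_pos hε]; linarith
  obtain ⟨m, hm, hm'⟩ := exists_nat_pow_near (one_le_two.trans h2ε) one_lt_two
  have hm1 : 1 ≤ m := by
    by_contra! h
    interval_cases m
    norm_num at hm'
    linarith
  have hlog : m * log 2 ≤ |log ε| := by
    rw [abs_of_neg (log_neg hε (by linarith)), ← log_inv, ← log_pow]
    exact log_le_log (by positivity) hm
  refine ⟨m + 1, ?_, by omega, ?_⟩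
  · have h := mul_lt_mul_of_pos_right hm' hε
    rw [inv_mul_cancel₀ hε.ne'] at h
    exact h.le
  · push_cast
    have : (1 : ℝ) ≤ m := by exact_mod_cast hm1
    nlinarith [log_pos one_lt_two]

lemma setLIntegral_ofReal_le_mul_measure {α : Type*} [MeasurableSpace α] (μ : Measure α)
    {g : α → ℝ} {s t : Set α} {c : ℝ} (hst : s ⊆ t) (hg : ∀ x ∈ s, g x ≤ c) :
    ∫⁻ x in s, ENNReal.ofReal (g x) ∂μ ≤ ENNReal.ofReal c * μ t :=
  calc ∫⁻ x in s, ENNReal.ofReal (g x) ∂μ ≤ ∫⁻ _ in s, ENNReal.ofReal c ∂μ :=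
        setLIntegral_mono measurable_const fun x hx => ENNReal.ofReal_le_ofReal (hg x hx)
    _ = ENNReal.ofReal c * μ s := setLIntegral_const _ _
    _ ≤ ENNReal.ofReal c * μ t := by gcongr

section AddHaar

variable {E : Type*} [NormedAddCommGroup E] [NormedSpace ℝ E] [FiniteDimensional ℝ E]
  [Nontrivial E] [MeasurableSpace E] [BorelSpace E] (μ : Measure E) [μ.IsAddHaarMeasure]
  {g : E → ℝ} {y : E}

lemma lintegral_annulus_le (hdecay : ∀ x, g x * ‖x - y‖ ^ finrank ℝ E ≤ 1) {r : ℝ}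
    (hr : 0 < r) :
    ∫⁻ x in ball y (2 * r) \ ball y r, ENNReal.ofReal (g x) ∂μ ≤
      2 ^ finrank ℝ E * μ (ball 0 1) := by
  have hbound : ∀ x ∈ ball y (2 * r) \ ball y r, g x ≤ (r ^ finrank ℝ E)⁻¹ := by
    rintro x ⟨-, hx⟩
    refine le_inv_pow_of_mul_pow_le (hdecay x) hr ?_
    simpa [dist_eq_norm] using hx
  calc _ ≤ ENNReal.ofReal (r ^ finrank ℝ E)⁻¹ * μ (ball y (2 * r)) :=
        setLIntegral_ofReal_le_mul_measure μ Set.sdiff_subset hbound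
    _ = 2 ^ finrank ℝ E * μ (ball 0 1) := by
      have hscale : (r ^ finrank ℝ E)⁻¹ * (2 * r) ^ finrank ℝ E = 2 ^ finrank ℝ E := by
        rw [mul_pow]; field_simp
      rw [μ.addHaar_ball y (by positivity), ← mul_assoc, ← ENNReal.ofReal_mul (by positivity),
        hscale, ENNReal.ofReal_pow zero_le_two, ENNReal.ofReal_ofNat]

lemma lintegral_ball_two_pow_mul_le {M ε : ℝ} (hM : ∀ x, g x ≤ M)
    (hdecay : ∀ x, g x * ‖x - y‖ ^ finrank ℝ E ≤ 1) (hε : 0 < ε) (n : ℕ) :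
    ∫⁻ x in ball y (2 ^ n * ε), ENNReal.ofReal (g x) ∂μ ≤
      (ENNReal.ofReal (M * ε ^ finrank ℝ E) + n * 2 ^ finrank ℝ E) * μ (ball 0 1) := by
  induction n with
  | zero =>
    calc _ ≤ ENNReal.ofReal M * μ (ball y ε) := by
          simpa using setLIntegral_ofReal_le_mul_measure μ subset_rfl fun x _ => hM x
      _ = _ := by
          rw [μ.addHaar_ball y hε.le, ENNReal.ofReal_mul' (by positivity)]
          simp [mul_assoc]
  | succ n ih =>
    have hcover : ball y (2 ^ (n + 1) * ε) ⊆
        ball y (2 ^ n * ε) ∪ (ball y (2 * (2 ^ n * ε)) \ ball y (2 ^ n * ε)) := by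
      rw [Set.union_sdiff_self, pow_succ, mul_comm _ (2 : ℝ), mul_assoc]
      exact Set.subset_union_right
    calc _ ≤ _ := lintegral_mono_set hcover
      _ ≤ _ := lintegral_union_le _ _ _
      _ ≤ _ := add_le_add ih (lintegral_annulus_le μ hdecay (by positivity))
      _ = _ := by push_cast; ring

lemma setLIntegral_le_of_le_of_mul_norm_pow_le {M ε : ℝ} {n : ℕ} (hM : ∀ x, g x ≤ M)
    (hdecay : ∀ x, g x * ‖x - y‖ ^ finrank ℝ E ≤ 1) (hε : 0 < ε) (hn : 1 ≤ 2 ^ n * ε)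
    (s : Set E) :
    ∫⁻ x in s, ENNReal.ofReal (g x) ∂μ ≤
      (ENNReal.ofReal (M * ε ^ finrank ℝ E) + n * 2 ^ finrank ℝ E) * μ (ball 0 1) + μ s := by
  have hfar : ∀ x ∈ s \ ball y (2 ^ n * ε), g x ≤ 1 := by
    rintro x ⟨-, hx⟩
    simpa using le_inv_pow_of_mul_pow_le (hdecay x) one_pos
      (hn.trans (by simpa [dist_eq_norm] using hx))
  have hcover : s ⊆ ball y (2 ^ n * ε) ∪ (s \ ball y (2 ^ n * ε)) := by
    rw [Set.union_sdiff_self]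
    exact Set.subset_union_right
  calc _ ≤ _ := lintegral_mono_set hcover
    _ ≤ _ := lintegral_union_le _ _ _
    _ ≤ _ := add_le_add (lintegral_ball_two_pow_mul_le μ hM hdecay hε n)
          (by simpa using setLIntegral_ofReal_le_mul_measure μ Set.sdiff_subset hfar)

lemma setIntegral_bubble_le {a ε : ℝ} (ha : 0 < a) (hε : 0 < ε) {n : ℕ} (hn : 1 ≤ 2 ^ n * ε)
    {s : Set E} (hs : μ s ≠ ∞) :
    ∫ x in s, (a * ε ^ 2 + ‖x - y‖ ^ 2) ^ (-((finrank ℝ E : ℝ) / 2)) ∂μ ≤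
      (a ^ (-((finrank ℝ E : ℝ) / 2)) + n * 2 ^ finrank ℝ E) * μ.real (ball 0 1) + μ.real s := by
  set d := finrank ℝ E
  set g : E → ℝ := fun x => (a * ε ^ 2 + ‖x - y‖ ^ 2) ^ (-((d : ℝ) / 2))
  have hg0 : ∀ x, 0 ≤ g x := fun x => Real.rpow_nonneg (by positivity) _
  have hM : ∀ x, g x ≤ (a * ε ^ 2) ^ (-((d : ℝ) / 2)) := fun x =>
    Real.rpow_le_rpow_of_nonpos (by positivity) (le_add_of_nonneg_right (sq_nonneg _))
      (by simp only [neg_nonpos]; positivity)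
  have hdecay : ∀ x, g x * ‖x - y‖ ^ d ≤ 1 := fun x =>
    add_sq_rpow_neg_half_mul_pow_le_one (by positivity) (norm_nonneg _) d
  have hMε : (a * ε ^ 2) ^ (-((d : ℝ) / 2)) * ε ^ d = a ^ (-((d : ℝ) / 2)) := by
    rw [Real.mul_rpow ha.le (by positivity), Real.rpow_neg (sq_nonneg ε), sq_rpow_half hε.le,
      mul_assoc, inv_mul_cancel₀ (by positivity), mul_one]
  have hball : μ (ball 0 1) ≠ ∞ := measure_ball_lt_top.ne
  rw [integral_eq_lintegral_of_nonneg_ae (ae_of_all _ hg0)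
    (by fun_prop : Measurable g).aestronglyMeasurable]
  refine ENNReal.toReal_le_of_le_ofReal (by positivity) ?_
  refine (setLIntegral_le_of_le_of_mul_norm_pow_le μ hM hdecay hε hn s).trans_eq ?_
  rw [hMε, measureReal_def, measureReal_def, ENNReal.ofReal_add (by positivity) (by positivity),
    ENNReal.ofReal_mul (by positivity), ENNReal.ofReal_toReal hball, ENNReal.ofReal_toReal hs,
    ENNReal.ofReal_add (by positivity) (by positivity)]
  simp [d]

lemma setIntegral_bubble_le_mul_abs_log {a ε : ℝ} (ha : 0 < a) (hε : 0 < ε) (hε2 : ε ≤ 1 / 2)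
    {s : Set E} (hs : μ s ≠ ∞) :
    ∫ x in s, (a * ε ^ 2 + ‖x - y‖ ^ 2) ^ (-((finrank ℝ E : ℝ) / 2)) ∂μ ≤
      2 * ((a ^ (-((finrank ℝ E : ℝ) / 2)) + 2 ^ finrank ℝ E) * μ.real (ball 0 1) + μ.real s) /
        log 2 * |log ε| := by
  obtain ⟨n, hn, hn1, hnlog⟩ := exists_two_pow_mul_ge_one hε hε2
  set A := a ^ (-((finrank ℝ E : ℝ) / 2))
  set B : ℝ := 2 ^ finrank ℝ E
  set V := μ.real (ball 0 1)
  have hA : 0 ≤ A := by positivity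
  have hV : 0 ≤ V := by positivity
  have hW : 0 ≤ μ.real s := by positivity
  have hn1' : (1 : ℝ) ≤ n := by exact_mod_cast hn1
  have hnle : (n : ℝ) ≤ 2 * |log ε| / log 2 := by
    rw [le_div_iff₀ (log_pos one_lt_two)]; exact hnlog
  calc _ ≤ (A + n * B) * V + μ.real s := setIntegral_bubble_le μ ha hε hn hs
    _ ≤ n * ((A + B) * V + μ.real s) := by nlinarith [mul_nonneg hA hV]
    _ ≤ 2 * |log ε| / log 2 * ((A + B) * V + μ.real s) := by gcongr
    _ = _ := by ring

end AddHaar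

lemma talentiRescaled_eq {N : ℕ} (hN : 2 ≤ N) {ε : ℝ} (hε : 0 < ε)
    (y x : EuclideanSpace ℝ (Fin N)) :
    talentiRescaled N ε y x =
      ((N : ℝ) * ((N : ℝ) - 2) * ε / ((N : ℝ) * ((N : ℝ) - 2) * ε ^ 2 + ‖x - y‖ ^ 2)) ^
        (((N : ℝ) - 2) / 2) := by
  have ha : 0 ≤ (N : ℝ) * ((N : ℝ) - 2) := by
    have : (2 : ℝ) ≤ N := by exact_mod_cast hN
    nlinarith
  rw [talentiRescaled, talenti, Real.rpow_neg hε.le, ← Real.inv_rpow hε.le,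
    ← Real.mul_rpow (by positivity) (by positivity)]
  congr 1
  rw [norm_smul, norm_inv, Real.norm_of_nonneg hε.le]
  field_simp

lemma talentiRescaled_rpow_eq {N : ℕ} (hN : 3 ≤ N) {ε : ℝ} (hε : 0 < ε)
    (y x : EuclideanSpace ℝ (Fin N)) :
    talentiRescaled N ε y x ^ ((N : ℝ) / ((N : ℝ) - 2)) =
      ((N : ℝ) * ((N : ℝ) - 2)) ^ ((N : ℝ) / 2) * ε ^ ((N : ℝ) / 2) *
        ((N : ℝ) * ((N : ℝ) - 2) * ε ^ 2 + ‖x - y‖ ^ 2) ^ (-((N : ℝ) / 2)) := by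
  have hN' : (3 : ℝ) ≤ N := by exact_mod_cast hN
  have ha : 0 < (N : ℝ) * ((N : ℝ) - 2) := by nlinarith
  have hexp : ((N : ℝ) - 2) / 2 * ((N : ℝ) / ((N : ℝ) - 2)) = (N : ℝ) / 2 := by
    have : (N : ℝ) - 2 ≠ 0 := by linarith
    field_simp
  rw [talentiRescaled_eq (by omega) hε, ← Real.rpow_mul (by positivity), hexp,
    Real.div_rpow (by positivity) (by positivity), Real.mul_rpow ha.le hε.le,
    Real.rpow_neg (by positivity), div_eq_mul_inv]

theorem stmt_14 (N : ℕ) (hN : 3 ≤ N) (Ω : Set (EuclideanSpace ℝ (Fin N)))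
    (hΩb : Bornology.IsBounded Ω) (hΩm : MeasurableSet Ω) :
    ∃ c₂ > (0 : ℝ), ∀ ε ∈ Set.Ioc (0 : ℝ) (1 / 2), ∀ y : EuclideanSpace ℝ (Fin N),
      ∫ x in Ω, talentiRescaled N ε y x ^ ((N : ℝ) / ((N : ℝ) - 2))
        ≤ c₂ * ε ^ ((N : ℝ) / 2) * |Real.log ε| := by
  have : Nontrivial (EuclideanSpace ℝ (Fin N)) :=
    Module.nontrivial_of_finrank_pos (R := ℝ) (by rw [finrank_euclideanSpace_fin]; omega)
  set a : ℝ := (N : ℝ) * ((N : ℝ) - 2)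
  have ha : 0 < a := by
    have : (3 : ℝ) ≤ N := by exact_mod_cast hN
    nlinarith
  set V := volume.real (ball (0 : EuclideanSpace ℝ (Fin N)) 1)
  have hV : 0 < V := ENNReal.toReal_pos (measure_ball_pos _ _ one_pos).ne' measure_ball_lt_top.ne
  set C := 2 * ((a ^ (-((N : ℝ) / 2)) + 2 ^ N) * V + volume.real Ω) / log 2
  refine ⟨a ^ ((N : ℝ) / 2) * C, by positivity, ?_⟩
  rintro ε ⟨hε, hε2⟩ y
  have hbubble :=
    setIntegral_bubble_le_mul_abs_log volume (y := y) ha hε hε2 hΩb.measure_lt_top.ne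
  rw [finrank_euclideanSpace_fin] at hbubble
  calc _ = a ^ ((N : ℝ) / 2) * ε ^ ((N : ℝ) / 2) *
          ∫ x in Ω, (a * ε ^ 2 + ‖x - y‖ ^ 2) ^ (-((N : ℝ) / 2)) := by
        rw [← integral_const_mul]
        exact setIntegral_congr_fun hΩm fun x _ => talentiRescaled_rpow_eq hN hε y x
    _ ≤ a ^ ((N : ℝ) / 2) * ε ^ ((N : ℝ) / 2) * (C * |log ε|) := by gcongr
    _ = _ := by ring
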